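/- For octonions x, a with |x̄ a| < 1, the identity D̄_x[(x - a|x|²)/|1 - x̄a|⁸] = [6(1 - |a|²|x|²) + 2(1 - x̄a)](1 - x̄a)/|1 - x̄a|^{10} holds, where D̄_x = Σ_{i=0}^7 ē_i ∂/∂x_i. -/

import Mathlib

noncomputable section
open MeasureTheory Metric
open scoped Quaternion

/-- The octonions, via the Cayley–Dickson construction on the quaternions,
carrying the Euclidean (`L²`) norm. -/
abbrev Octonion : Type := WithLp 2 (ℍ[ℝ] × ℍ[ℝ])

namespace Octonion

def mk (a b : ℍ[ℝ]) : Octonion := (WithLp.equiv 2 (ℍ[ℝ] × ℍ[ℝ])).symm (a, b)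
def p1 (x : Octonion) : ℍ[ℝ] := (WithLp.equiv 2 (ℍ[ℝ] × ℍ[ℝ]) x).1
def p2 (x : Octonion) : ℍ[ℝ] := (WithLp.equiv 2 (ℍ[ℝ] × ℍ[ℝ]) x).2

instance : One Octonion := ⟨mk 1 0⟩
/-- Cayley–Dickson multiplication: `(a,b)(c,d) = (ac - d̄b, da + bc̄)`. -/
instance : Mul Octonion :=
  ⟨fun x y => mk (p1 x * p1 y - star (p2 y) * p2 x) (p2 y * p1 x + p2 x * star (p1 y))⟩

/-- Octonionic conjugation. -/
def conj (x : Octonion) : Octonion := mk (star (p1 x)) (-(p2 x))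

/-- The standard basis `e₀ = 1, e₁, …, e₇` of the octonions. -/
def e : Fin 8 → Octonion
  | 0 => mk 1 0
  | 1 => mk ⟨0,1,0,0⟩ 0
  | 2 => mk ⟨0,0,1,0⟩ 0
  | 3 => mk ⟨0,0,0,1⟩ 0
  | 4 => mk 0 1
  | 5 => mk 0 ⟨0,1,0,0⟩
  | 6 => mk 0 ⟨0,0,1,0⟩
  | 7 => mk 0 ⟨0,0,0,1⟩

/-- The real coordinates of an octonion w.r.t. the basis `e`. -/
def coord (i : Fin 8) (x : Octonion) : ℝ :=
  match i with
  | 0 => (p1 x).re | 1 => (p1 x).imI | 2 => (p1 x).imJ | 3 => (p1 x).imK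
  | 4 => (p2 x).re | 5 => (p2 x).imI | 6 => (p2 x).imJ | 7 => (p2 x).imK

/-- Partial derivative in the direction `e i`. -/
def pd (i : Fin 8) (f : Octonion → Octonion) (x : Octonion) : Octonion :=
  fderiv ℝ f x (e i)

/-- The generalized Cauchy–Riemann operator `Df = ∑ eᵢ ∂f/∂xᵢ`. -/
def D (f : Octonion → Octonion) (x : Octonion) : Octonion := ∑ i, e i * pd i f x

/-- The right-acting Cauchy–Riemann operator `fD = ∑ (∂f/∂xᵢ) eᵢ`. -/
def Dright (f : Octonion → Octonion) (x : Octonion) : Octonion := ∑ i, pd i f x * e i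

/-- The conjugate Cauchy–Riemann operator `D̄f = ∑ ēᵢ ∂f/∂xᵢ`. -/
def Dbar (f : Octonion → Octonion) (x : Octonion) : Octonion := ∑ i, conj (e i) * pd i f x

/-- The Laplacian `Δf = ∑ ∂²f/∂xᵢ²`. -/
def lap (f : Octonion → Octonion) (x : Octonion) : Octonion :=
  ∑ i, fderiv ℝ (fun y => fderiv ℝ f y (e i)) x (e i)

instance : MeasurableSpace Octonion := borel _
instance : BorelSpace Octonion := ⟨rfl⟩
instance : MeasureSpace Octonion := ⟨Measure.addHaar⟩

/-- The surface measure on the unit sphere `S⁷`. -/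
def sphereMeasure : Measure (sphere (0 : Octonion) 1) := (volume : Measure Octonion).toSphere

/-- `ω₈`, the surface area of the unit sphere in `ℝ⁸`. -/
def ω : ℝ := (sphereMeasure Set.univ).toReal

end Octonion

/-!
Write `w = 1 - x̄a` and `z = x̄a`. By the product rule,
`∂ᵢf = |w|⁻⁸ (eᵢ - 2xᵢa) + 8|w|⁻¹⁰ ⟨w, ēᵢa⟩ (x - |x|²a)`. Contracting with `ēᵢ`, orthonormality
of the basis collapses `∑ ēᵢeᵢ` to `8`, `∑ xᵢ ēᵢa` to `z` and `∑ ⟨w, ēᵢa⟩ ēᵢ` to `wā`. Only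
identities valid in any composition algebra are then needed (`(ya)ā = |a|²y`, `āa = |a|²`,
`⟨c, ya⟩ = ⟨cā, y⟩`, `z² = 2⟨x,a⟩z - |x|²|a|²`), and they reduce both sides to combinations of
`1` and `z` with equal coefficients, using `|w|² = 1 - 2⟨x,a⟩ + |x|²|a|²`. Each of these
identities is checked in Cayley–Dickson coordinates.
-/

namespace Octonion

open scoped InnerProductSpace

@[ext]
theorem ext {x y : Octonion} (h1 : p1 x = p1 y) (h2 : p2 x = p2 y) : x = y :=
  (WithLp.equiv 2 (ℍ[ℝ] × ℍ[ℝ])).injective (Prod.ext h1 h2)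

@[simp] theorem p1_add (x y : Octonion) : p1 (x + y) = p1 x + p1 y := rfl
@[simp] theorem p2_add (x y : Octonion) : p2 (x + y) = p2 x + p2 y := rfl
@[simp] theorem p1_sub (x y : Octonion) : p1 (x - y) = p1 x - p1 y := rfl
@[simp] theorem p2_sub (x y : Octonion) : p2 (x - y) = p2 x - p2 y := rfl
@[simp] theorem p1_zero : p1 (0 : Octonion) = 0 := rfl
@[simp] theorem p2_zero : p2 (0 : Octonion) = 0 := rfl
@[simp] theorem p1_smul (r : ℝ) (x : Octonion) : p1 (r • x) = r • p1 x := rfl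
@[simp] theorem p2_smul (r : ℝ) (x : Octonion) : p2 (r • x) = r • p2 x := rfl
@[simp] theorem p1_one : p1 (1 : Octonion) = 1 := rfl
@[simp] theorem p2_one : p2 (1 : Octonion) = 0 := rfl
@[simp] theorem p1_mul (x y : Octonion) : p1 (x * y) = p1 x * p1 y - star (p2 y) * p2 x := rfl
@[simp] theorem p2_mul (x y : Octonion) : p2 (x * y) = p2 y * p1 x + p2 x * star (p1 y) := rfl
@[simp] theorem p1_conj (x : Octonion) : p1 (conj x) = star (p1 x) := rfl
@[simp] theorem p2_conj (x : Octonion) : p2 (conj x) = -p2 x := rfl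

theorem inner_def (x y : Octonion) : ⟪x, y⟫_ℝ = ⟪p1 x, p1 y⟫_ℝ + ⟪p2 x, p2 y⟫_ℝ :=
  WithLp.prod_inner_apply x y

-- Only a local instance: globally it would change how `-` and `*` elaborate in the final statement.
abbrev nonAssocRing : NonAssocRing Octonion :=
  { (inferInstance : AddCommGroup Octonion) with
    left_distrib := fun x y z => by ext <;> simp <;> noncomm_ring
    right_distrib := fun x y z => by ext <;> simp <;> noncomm_ring
    zero_mul := fun x => by ext <;> simp
    mul_zero := fun x => by ext <;> simp
    one_mul := fun x => by ext <;> simp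
    mul_one := fun x => by ext <;> simp }

attribute [local instance] nonAssocRing

instance : IsScalarTower ℝ Octonion Octonion :=
  ⟨fun r x y => by ext <;> simp [smul_sub, smul_add]⟩

instance : SMulCommClass ℝ Octonion Octonion :=
  ⟨fun r x y => by ext <;> simp [smul_sub, smul_add]⟩

theorem conj_add (x y : Octonion) : conj (x + y) = conj x + conj y := by
  ext <;> simp [add_comm]

theorem conj_smul (r : ℝ) (x : Octonion) : conj (r • x) = r • conj x := by
  ext <;> simp

theorem conj_mul_self (x : Octonion) : conj x * x = (‖x‖ ^ 2) • 1 := by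
  ext <;> simp only [← real_inner_self_eq_norm_sq, inner_def, Quaternion.inner_def] <;> simp <;> ring

theorem mul_mul_conj (y a : Octonion) : y * a * conj a = (‖a‖ ^ 2) • y := by
  ext <;> simp only [← real_inner_self_eq_norm_sq, inner_def, Quaternion.inner_def] <;> simp <;> ring

theorem conj_mul_add_conj_mul (x a : Octonion) :
    conj a * x + conj x * a = (2 * ⟪x, a⟫_ℝ) • 1 := by
  ext <;> simp only [inner_def, Quaternion.inner_def] <;> simp <;> ring

theorem add_conj (z : Octonion) : z + conj z = (2 * ⟪1, z⟫_ℝ) • 1 := by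
  ext <;> simp only [inner_def, Quaternion.inner_def] <;> simp; ring

theorem inner_one_conj_mul (x a : Octonion) : ⟪1, conj x * a⟫_ℝ = ⟪x, a⟫_ℝ := by
  simp only [inner_def, Quaternion.inner_def]; simp; ring

theorem inner_mul_right (c y a : Octonion) : ⟪c, y * a⟫_ℝ = ⟪c * conj a, y⟫_ℝ := by
  simp only [inner_def, Quaternion.inner_def]; simp; ring

theorem norm_one : ‖(1 : Octonion)‖ = 1 := by
  rw [← sq_eq_sq₀ (norm_nonneg _) zero_le_one, ← real_inner_self_eq_norm_sq]
  simp only [inner_def, Quaternion.inner_def]; simp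

theorem norm_mul (x y : Octonion) : ‖x * y‖ = ‖x‖ * ‖y‖ := by
  rw [← sq_eq_sq₀ (norm_nonneg _) (by positivity), mul_pow]
  simp only [← real_inner_self_eq_norm_sq, inner_def, Quaternion.inner_def]; simp; ring

theorem norm_conj (x : Octonion) : ‖conj x‖ = ‖x‖ := by
  rw [← sq_eq_sq₀ (norm_nonneg _) (norm_nonneg _)]
  simp only [← real_inner_self_eq_norm_sq, inner_def, Quaternion.inner_def]; simp

theorem mul_self_eq (z : Octonion) : z * z = (2 * ⟪1, z⟫_ℝ) • z - ‖z‖ ^ 2 • 1 := by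
  rw [← conj_mul_self, ← smul_one_mul, ← add_conj, add_mul, add_sub_cancel_right]

theorem norm_conj_mul (x a : Octonion) : ‖conj x * a‖ = ‖x‖ * ‖a‖ := by
  rw [norm_mul, norm_conj]

theorem conj_mul_mul_self (x a : Octonion) :
    conj x * a * (conj x * a) = (2 * ⟪x, a⟫_ℝ) • (conj x * a) - (‖x‖ ^ 2 * ‖a‖ ^ 2) • 1 := by
  rw [mul_self_eq, inner_one_conj_mul, norm_conj_mul, mul_pow]

theorem norm_one_sub_conj_mul_sq (x a : Octonion) :
    ‖1 - conj x * a‖ ^ 2 = 1 - 2 * ⟪x, a⟫_ℝ + ‖x‖ ^ 2 * ‖a‖ ^ 2 := by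
  rw [norm_sub_sq_real, norm_one, inner_one_conj_mul, norm_conj_mul]
  ring

theorem one_sub_conj_mul_ne_zero {x a : Octonion} (h : ‖x‖ * ‖a‖ < 1) :
    1 - conj x * a ≠ 0 := by
  intro h0
  have hnorm := norm_conj_mul x a
  rw [← sub_eq_zero.mp h0, norm_one] at hnorm
  linarith

theorem one_sub_conj_mul_mul_conj_mul (x a : Octonion) :
    (1 - conj x * a) * conj a * (x - ‖x‖ ^ 2 • a) =
      (2 * ⟪x, a⟫_ℝ - 2 * (‖x‖ ^ 2 * ‖a‖ ^ 2)) • 1 + (‖x‖ ^ 2 * ‖a‖ ^ 2 - 1) • (conj x * a) := by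
  have hax : conj a * x = (2 * ⟪x, a⟫_ℝ) • 1 - conj x * a :=
    eq_sub_of_add_eq (conj_mul_add_conj_mul x a)
  rw [sub_mul, one_mul, mul_mul_conj, sub_mul, mul_sub, mul_sub, smul_mul_assoc, mul_smul_comm,
    mul_smul_comm, smul_mul_assoc, hax, conj_mul_self, conj_mul_self]
  module

theorem smul_one_add_two_smul_mul_self (c : ℝ) (x a : Octonion) :
    (c • 1 + (2 : ℝ) • (1 - conj x * a)) * (1 - conj x * a) =
      (c + 2 - 2 * (‖x‖ ^ 2 * ‖a‖ ^ 2)) • 1 + (4 * ⟪x, a⟫_ℝ - c - 4) • (conj x * a) := by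
  rw [add_mul, smul_mul_assoc, smul_mul_assoc, one_mul, sub_mul 1 (conj x * a), one_mul,
    mul_sub (conj x * a) 1, mul_one, conj_mul_mul_self]
  module

-- `p1`, `p2`, `mk` are unfolded: the quaternion literals in `e` have type
-- `QuaternionAlgebra ℝ (-1) 0 (-1)` rather than `ℍ[ℝ]`, which blocks a rewrite of `p1 (mk a b)`.
theorem sum_conj_basis_mul_basis : ∑ i, conj (e i) * e i = (8 : ℝ) • 1 := by
  ext <;> simp [Fin.sum_univ_eight] <;> simp [e, p1, p2, mk]; norm_num

theorem sum_inner_smul_conj_basis (x : Octonion) : ∑ i, ⟪x, e i⟫_ℝ • conj (e i) = conj x := by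
  simp only [inner_def, Quaternion.inner_def]
  ext <;> simp [Fin.sum_univ_eight] <;> simp [e, p1, p2, mk]

theorem sum_inner_conj_basis_smul_conj_basis (x : Octonion) :
    ∑ i, ⟪x, conj (e i)⟫_ℝ • conj (e i) = x := by
  simp only [inner_def, Quaternion.inner_def]
  ext <;> simp [Fin.sum_univ_eight] <;> simp [e, p1, p2, mk]

theorem sum_conj_basis_mul_basis_sub (x a : Octonion) :
    ∑ i, conj (e i) * (e i - (2 * ⟪x, e i⟫_ℝ) • a) = (8 : ℝ) • 1 - (2 : ℝ) • (conj x * a) := by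
  simp only [mul_sub, Finset.sum_sub_distrib, sum_conj_basis_mul_basis, mul_smul_comm, mul_smul,
    ← Finset.smul_sum, ← smul_mul_assoc, ← Finset.sum_mul, sum_inner_smul_conj_basis]

theorem sum_inner_conj_basis_mul_smul (c a h : Octonion) :
    ∑ i, ⟪c, conj (e i) * a⟫_ℝ • (conj (e i) * h) = c * conj a * h := by
  simp only [inner_mul_right, ← smul_mul_assoc, ← Finset.sum_mul,
    sum_inner_conj_basis_smul_conj_basis]

def conjMulRightL (a : Octonion) : Octonion →L[ℝ] Octonion :=
  LinearMap.toContinuousLinearMap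
    { toFun := fun y => conj y * a
      map_add' := fun x y => by simp only [conj_add, add_mul]
      map_smul' := fun r x => by simp only [conj_smul, smul_mul_assoc, RingHom.id_apply] }

@[simp]
theorem conjMulRightL_apply (a y : Octonion) : conjMulRightL a y = conj y * a := rfl

theorem fderiv_bergman_apply {a x : Octonion} (hw : 1 - conj x * a ≠ 0) (v : Octonion) :
    fderiv ℝ (fun y => (‖1 - conj y * a‖ ^ 8)⁻¹ • (y - ‖y‖ ^ 2 • a)) x v =
      (‖1 - conj x * a‖ ^ 8)⁻¹ • (v - (2 * ⟪x, v⟫_ℝ) • a) +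
        (8 / ‖1 - conj x * a‖ ^ 10 * ⟪1 - conj x * a, conj v * a⟫_ℝ) • (x - ‖x‖ ^ 2 • a) := by
  have hw' : HasFDerivAt (fun y => 1 - conj y * a) (-conjMulRightL a) x := by
    simpa using ((conjMulRightL a).hasFDerivAt (x := x)).const_sub 1
  have hq : ‖1 - conj x * a‖ ^ 2 ≠ 0 := by positivity
  have hinv := ((hasDerivAt_pow 4 (‖1 - conj x * a‖ ^ 2)).inv (pow_ne_zero 4 hq)).comp_hasFDerivAt
    x hw'.norm_sq
  have hid := hasFDerivAt_id (𝕜 := ℝ) x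
  have hf : HasFDerivAt (fun y => ((‖1 - conj y * a‖ ^ 2) ^ 4)⁻¹ • (y - ‖y‖ ^ 2 • a)) _ x :=
    hinv.smul (hid.sub (hid.norm_sq.smul_const a))
  have hfun : (fun y => (‖1 - conj y * a‖ ^ 8)⁻¹ • (y - ‖y‖ ^ 2 • a)) =
      fun y => ((‖1 - conj y * a‖ ^ 2) ^ 4)⁻¹ • (y - ‖y‖ ^ 2 • a) := by
    ext1 y
    ring_nf
  rw [hfun, hf.fderiv]
  simp only [add_apply, smul_apply, sub_apply, neg_apply, ContinuousLinearMap.comp_apply,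
    ContinuousLinearMap.smulRight_apply, ContinuousLinearMap.id_apply, innerSL_apply_apply,
    conjMulRightL_apply, Function.comp_apply, Pi.inv_apply, id, inner_neg_right, smul_eq_mul,
    real_inner_comm v x]
  match_scalars <;> field_simp <;> ring

theorem dbar_bergman {a x : Octonion} (hw : 1 - conj x * a ≠ 0) :
    Dbar (fun y => (‖1 - conj y * a‖ ^ 8)⁻¹ • (y - ‖y‖ ^ 2 • a)) x =
      (‖1 - conj x * a‖ ^ 8)⁻¹ • ((8 : ℝ) • 1 - (2 : ℝ) • (conj x * a)) +
        (8 / ‖1 - conj x * a‖ ^ 10) • ((1 - conj x * a) * conj a * (x - ‖x‖ ^ 2 • a)) := by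
  simp only [Dbar, pd, fderiv_bergman_apply hw, mul_add, mul_smul_comm, Finset.sum_add_distrib,
    ← Finset.smul_sum, sum_conj_basis_mul_basis_sub]
  simp only [mul_smul, ← Finset.smul_sum, sum_inner_conj_basis_mul_smul]

end Octonion

open Octonion

/-- `D̄ₓ[(x - a|x|²)/|1 - x̄a|⁸] = [6(1-|a|²|x|²) + 2(1-x̄a)](1-x̄a)/|1-x̄a|¹⁰`
whenever `|x̄a| = |x||a| < 1`. -/
theorem dbar_bergman_formula (a x : Octonion) (h : ‖x‖ * ‖a‖ < 1) :
    Octonion.Dbar (fun y =>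
        (‖(1 : Octonion) - Octonion.conj y * a‖ ^ 8)⁻¹ • (y - (‖y‖ ^ 2) • a)) x =
      (‖(1 : Octonion) - Octonion.conj x * a‖ ^ 10)⁻¹ •
        (((6 * (1 - ‖a‖ ^ 2 * ‖x‖ ^ 2)) • (1 : Octonion) +
            (2 : ℝ) • ((1 : Octonion) - Octonion.conj x * a)) *
          ((1 : Octonion) - Octonion.conj x * a)) := by
  have hw := one_sub_conj_mul_ne_zero h
  have hq0 : ‖1 - conj x * a‖ ^ 2 ≠ 0 := by positivity
  rw [dbar_bergman hw, one_sub_conj_mul_mul_conj_mul, smul_one_add_two_smul_mul_self]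
  rw [show ‖1 - conj x * a‖ ^ 8 = (‖1 - conj x * a‖ ^ 2) ^ 4 by ring,
    show ‖1 - conj x * a‖ ^ 10 = (‖1 - conj x * a‖ ^ 2) ^ 5 by ring,
    norm_one_sub_conj_mul_sq] at *
  match_scalars <;> field_simp <;> ring
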